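/- arXiv:1810.03311 — 5 statements merged into one kernel-verified Lean document; each statement's English description precedes it below -/
import Mathlib

section
/- (Main stability theorem, product form.) Let E be an edge relation on {1,…,k}, let P₁,…,P_k be invertible n×n real matrices, let J₁,…,J_k be n×n real matrices, and set A_i = P_i J_i P_i⁻¹. Suppose there is a constant K with 0 ≤ K < 1 and, for each edge (r,s) ∈ E, a nonempty set I_{(r,s)} ⊆ (0,∞) such that ‖P_s⁻¹ P_r · exp(η J_r)‖ ≤ K for every η ∈ I_{(r,s)}. Let C = (max_{1≤i≤k} ‖P_i‖)·(max_{1≤i≤k} ‖P_i⁻¹‖). Then for every n ≥ 1, every sequence σ₀, σ₁, …, σ_n in {1,…,k} with (σ_j, σ_{j+1}) ∈ E for all 0 ≤ j ≤ n−1, and every choice of durations τ_j ∈ I_{(σ_j, σ_{j+1})} for 0 ≤ j ≤ n−1, the ordered product satisfies ‖exp(τ_{n−1} A_{σ_{n−1}}) ⋯ exp(τ₁ A_{σ₁}) · exp(τ₀ A_{σ₀})‖ ≤ C · K^n. -/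
open scoped Matrix.Norms.L2Operator
open NormedSpace

/-!
Write `A_i = P_i J_i P_i⁻¹`, so that `exp (τ A_i) = P_i exp (τ J_i) P_i⁻¹`. Inserting
`P_{σ_{j+1}} P_{σ_{j+1}}⁻¹` between consecutive factors, the ordered product telescopes to
`P_{σ_N} · ∏_j (P_{σ_{j+1}}⁻¹ P_{σ_j} exp (τ_j J_{σ_j})) · P_{σ_0}⁻¹`, and every factor of the
middle product has norm at most `K` by hypothesis.
-/

theorem List.prod_map_reverse_range_units_conj {M : Type*} [Monoid M] (u : ℕ → Mˣ)
    (x : ℕ → M) (N : ℕ) :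
    ((List.range N).reverse.map fun j => (u j : M) * x j * ↑(u j)⁻¹).prod =
      u N * ((List.range N).reverse.map fun j => ↑(u (j + 1))⁻¹ * u j * x j).prod *
        ↑(u 0)⁻¹ := by
  induction N with
  | zero => simp
  | succ N ih =>
    simp only [List.range_succ, List.reverse_append, List.reverse_singleton, List.map_cons,
      List.singleton_append, List.prod_cons, ih]
    simp only [mul_assoc, Units.mul_inv_cancel_left, Units.inv_mul_cancel_left]

theorem List.norm_prod_le_pow_length {R : Type*} [SeminormedRing R] {l : List R} (hl : l ≠ [])
    {K : ℝ} (h : ∀ x ∈ l, ‖x‖ ≤ K) : ‖l.prod‖ ≤ K ^ l.length := by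
  calc ‖l.prod‖ ≤ (l.map norm).prod := List.norm_prod_le' hl
    _ ≤ (l.map fun _ => K).prod :=
      List.prod_map_le_prod_map₀ _ _ (fun x _ => norm_nonneg x) h
    _ = K ^ l.length := by simp [List.map_const', List.prod_replicate]

theorem switched_system_product_norm_le_general {n k : ℕ}
    (E : Fin k → Fin k → Prop)
    (P J A : Fin k → Matrix (Fin n) (Fin n) ℝ)
    (hP : ∀ i, IsUnit (P i))
    (hA : ∀ i, A i = P i * J i * (P i)⁻¹)
    (K : ℝ) (hK0 : 0 ≤ K)
    (I : Fin k → Fin k → Set ℝ)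
    (hKbound : ∀ r s, E r s → ∀ η ∈ I r s, ‖(P s)⁻¹ * P r * exp (η • J r)‖ ≤ K)
    (C : ℝ) (hC : C = (⨆ i, ‖P i‖) * ⨆ i, ‖(P i)⁻¹‖) :
    ∀ N : ℕ, 1 ≤ N → ∀ σ : ℕ → Fin k, (∀ j < N, E (σ j) (σ (j + 1))) →
      ∀ τ : ℕ → ℝ, (∀ j < N, τ j ∈ I (σ j) (σ (j + 1))) →
        ‖((List.range N).reverse.map (fun j => exp (τ j • A (σ j)))).prod‖ ≤ C * K ^ N := by
  intro N hN σ hσ τ hτ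
  have hconj (j : ℕ) :
      exp (τ j • A (σ j)) = P (σ j) * exp (τ j • J (σ j)) * (P (σ j))⁻¹ := by
    rw [hA, ← Matrix.exp_conj _ _ (hP _), mul_smul_comm, smul_mul_assoc]
  have htelescope := List.prod_map_reverse_range_units_conj (fun j => (hP (σ j)).unit)
    (fun j => exp (τ j • J (σ j))) N
  simp only [Matrix.coe_units_inv, IsUnit.unit_spec] at htelescope
  set Q := ((List.range N).reverse.map fun j =>
    (P (σ (j + 1)))⁻¹ * P (σ j) * exp (τ j • J (σ j))).prod
  have hQ : ‖Q‖ ≤ K ^ N := by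
    refine (List.norm_prod_le_pow_length (K := K) (by simp; omega) ?_).trans_eq (by simp)
    simp only [List.mem_map, List.mem_reverse, List.mem_range]
    rintro _ ⟨j, hj, rfl⟩
    exact hKbound _ _ (hσ j hj) _ (hτ j hj)
  have hPN : ‖P (σ N)‖ ≤ ⨆ i, ‖P i‖ := le_ciSup (Finite.bddAbove_range fun i => ‖P i‖) _
  have hP0 : ‖(P (σ 0))⁻¹‖ ≤ ⨆ i, ‖(P i)⁻¹‖ :=
    le_ciSup (Finite.bddAbove_range fun i => ‖(P i)⁻¹‖) _
  have hPN0 : 0 ≤ ⨆ i, ‖P i‖ := (norm_nonneg _).trans hPN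
  rw [funext hconj, htelescope, hC]
  calc ‖P (σ N) * Q * (P (σ 0))⁻¹‖ ≤ ‖P (σ N)‖ * ‖Q‖ * ‖(P (σ 0))⁻¹‖ := norm_mul₃_le
    _ ≤ (⨆ i, ‖P i‖) * K ^ N * ⨆ i, ‖(P i)⁻¹‖ := by gcongr
    _ = _ := mul_right_comm _ _ _

/-- Main stability theorem, product form.  Let `E` be an edge relation on `{1,…,k}`,
`P₁,…,P_k` invertible `n × n` real matrices, `J₁,…,J_k` real matrices,
`A_i = P_i J_i P_i⁻¹`.  Suppose `0 ≤ K < 1` and for each edge `(r,s) ∈ E` there is a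
nonempty set `I_{(r,s)} ⊆ (0,∞)` with `‖P_s⁻¹ P_r · exp(η J_r)‖ ≤ K` for all
`η ∈ I_{(r,s)}`.  With `C = (max_i ‖P_i‖)·(max_i ‖P_i⁻¹‖)`, every admissible switching
path of length `n ≥ 1` with admissible durations yields
`‖exp(τ_{n−1} A_{σ_{n−1}}) ⋯ exp(τ₀ A_{σ₀})‖ ≤ C · Kⁿ`. -/
theorem switched_system_product_norm_le {n k : ℕ} (hk : 0 < k)
    (E : Fin k → Fin k → Prop)
    (P J A : Fin k → Matrix (Fin n) (Fin n) ℝ)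
    (hP : ∀ i, IsUnit (P i))
    (hA : ∀ i, A i = P i * J i * (P i)⁻¹)
    (K : ℝ) (hK0 : 0 ≤ K) (hK1 : K < 1)
    (I : Fin k → Fin k → Set ℝ)
    (hImem : ∀ r s, E r s → (I r s).Nonempty)
    (hIsub : ∀ r s, E r s → I r s ⊆ Set.Ioi (0 : ℝ))
    (hKbound : ∀ r s, E r s → ∀ η ∈ I r s, ‖(P s)⁻¹ * P r * exp (η • J r)‖ ≤ K)
    (C : ℝ) (hC : C = (⨆ i, ‖P i‖) * ⨆ i, ‖(P i)⁻¹‖) :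
    ∀ N : ℕ, 1 ≤ N → ∀ σ : ℕ → Fin k, (∀ j < N, E (σ j) (σ (j + 1))) →
      ∀ τ : ℕ → ℝ, (∀ j < N, τ j ∈ I (σ j) (σ (j + 1))) →
        ‖((List.range N).reverse.map (fun j => exp (τ j • A (σ j)))).prod‖ ≤ C * K ^ N :=
  switched_system_product_norm_le_general E P J A hP hA K hK0 I hKbound C hC
end

section
/- (Main stability theorem, exponential-in-time form.) Let E be an edge relation on {1,…,k}, let P₁,…,P_k be invertible n×n real matrices, let J₁,…,J_k be n×n real matrices, and set A_i = P_i J_i P_i⁻¹. Suppose there are constants K with 0 < K < 1 and T > 0 and, for each edge (r,s) ∈ E, a nonempty set I_{(r,s)} ⊆ (0, T] such that ‖P_s⁻¹ P_r · exp(η J_r)‖ ≤ K for every η ∈ I_{(r,s)}. Then there exist constants C > 0 and β > 0 such that for every n ≥ 1, every sequence σ₀, …, σ_n in {1,…,k} with (σ_j, σ_{j+1}) ∈ E for all 0 ≤ j ≤ n−1, and every choice of durations τ_j ∈ I_{(σ_j, σ_{j+1})}, the ordered product satisfies ‖exp(τ_{n−1} A_{σ_{n−1}}) ⋯ exp(τ₀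 A_{σ₀})‖ ≤ C · e^{−β (τ₀ + τ₁ + ⋯ + τ_{n−1})}. (One may take β = −ln(K)/T.) -/
open scoped Matrix.Norms.L2Operator
open NormedSpace

/-!
Conjugating by `P_i` turns each flow `exp (τ A_i)` into `P_i exp (τ J_i) P_i⁻¹`, so along a
switching path the inner factors telescope: the ordered product equals
`P_{σ_N} · G_{N-1} ⋯ G_0 · P_{σ_0}⁻¹` with `G_j = P_{σ_{j+1}}⁻¹ P_{σ_j} exp (τ_j J_{σ_j})`.
Each `G_j` has norm at most `K`, and since every duration is at most `T`,
`K ^ N = exp (-β N T) ≤ exp (-β ∑ τ_j)` for `β = -log K / T`.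
-/

section OrderedProd

variable {M : Type*} [Monoid M]

def orderedProd (f : ℕ → M) (N : ℕ) : M :=
  ((List.range N).reverse.map f).prod

@[simp]
theorem orderedProd_zero (f : ℕ → M) : orderedProd f 0 = 1 := rfl

theorem orderedProd_succ (f : ℕ → M) (N : ℕ) :
    orderedProd f (N + 1) = f N * orderedProd f N := by
  simp [orderedProd, List.range_succ]

theorem orderedProd_units_conj (u : ℕ → Mˣ) (x : ℕ → M) (N : ℕ) :
    orderedProd (fun j => u j * x j * ↑(u j)⁻¹) N =
      u N * orderedProd (fun j => ↑(u (j + 1))⁻¹ * u j * x j) N * ↑(u 0)⁻¹ := by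
  induction N with
  | zero => simp
  | succ N ih =>
    rw [orderedProd_succ, orderedProd_succ, ih]
    simp only [mul_assoc, Units.inv_mul_cancel_left, Units.mul_inv_cancel_left]

end OrderedProd

theorem norm_orderedProd_le_pow {R : Type*} [SeminormedRing R] {f : ℕ → R} {K : ℝ} {N : ℕ}
    (hN : 1 ≤ N) (hf : ∀ j < N, ‖f j‖ ≤ K) : ‖orderedProd f N‖ ≤ K ^ N := by
  induction N, hN using Nat.le_induction with
  | base => simpa [orderedProd] using hf 0 one_pos
  | succ N hN ih =>
    have hK : 0 ≤ K := (norm_nonneg _).trans (hf 0 (by omega))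
    calc ‖orderedProd f (N + 1)‖ ≤ ‖f N‖ * ‖orderedProd f N‖ := by
          rw [orderedProd_succ]; exact norm_mul_le _ _
      _ ≤ K * K ^ N := by
          gcongr
          · exact hf N N.lt_succ_self
          · exact ih fun j hj => hf j (hj.trans N.lt_succ_self)
      _ = K ^ (N + 1) := (pow_succ' K N).symm

theorem pow_le_exp_neg_mul_sum {K T β : ℝ} {N : ℕ} {τ : ℕ → ℝ} (hK : 0 < K) (hβ : 0 ≤ β)
    (hβT : β * T ≤ -Real.log K) (hτ : ∀ j < N, τ j ≤ T) :
    K ^ N ≤ Real.exp (-β * ∑ j ∈ Finset.range N, τ j) := by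
  have hsum : ∑ j ∈ Finset.range N, τ j ≤ N * T := by
    simpa using Finset.sum_le_sum fun j hj => hτ j (Finset.mem_range.mp hj)
  rw [← Real.exp_log (pow_pos hK N), Real.log_pow, Real.exp_le_exp]
  nlinarith [mul_le_mul_of_nonneg_left hsum hβ, N.cast_nonneg (α := ℝ)]

theorem Matrix.exp_smul_conj {n : Type*} [Fintype n] [DecidableEq n]
    {P : Matrix n n ℝ} (hP : IsUnit P) (J : Matrix n n ℝ) (t : ℝ) :
    exp (t • (P * J * P⁻¹)) = P * exp (t • J) * P⁻¹ := by
  rw [← Matrix.smul_mul, ← Matrix.mul_smul, Matrix.exp_conj _ _ hP]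

theorem switched_system_exponential_stability_general {n k : ℕ}
    (E : Fin k → Fin k → Prop)
    (P J A : Fin k → Matrix (Fin n) (Fin n) ℝ)
    (hP : ∀ i, IsUnit (P i))
    (hA : ∀ i, A i = P i * J i * (P i)⁻¹)
    (K : ℝ) (hK0 : 0 < K) (hK1 : K < 1) (T : ℝ) (hT : 0 < T)
    (I : Fin k → Fin k → Set ℝ)
    (hIsub : ∀ r s, E r s → I r s ⊆ Set.Ioc (0 : ℝ) T)
    (hKbound : ∀ r s, E r s → ∀ η ∈ I r s, ‖(P s)⁻¹ * P r * exp (η • J r)‖ ≤ K) :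
    ∃ C > (0 : ℝ), ∃ β > (0 : ℝ),
      ∀ N : ℕ, 1 ≤ N → ∀ σ : ℕ → Fin k, (∀ j < N, E (σ j) (σ (j + 1))) →
        ∀ τ : ℕ → ℝ, (∀ j < N, τ j ∈ I (σ j) (σ (j + 1))) →
          ‖((List.range N).reverse.map (fun j => exp (τ j • A (σ j)))).prod‖ ≤
            C * Real.exp (-β * ∑ j ∈ Finset.range N, τ j) := by
  have hβ : 0 < -Real.log K / T := div_pos (neg_pos.mpr (Real.log_neg hK0 hK1)) hT
  refine ⟨1 + (∑ i, ‖P i‖) * ∑ i, ‖(P i)⁻¹‖, by positivity, _, hβ, ?_⟩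
  intro N hN σ hσ τ hτ
  have hprod : orderedProd (fun j => exp (τ j • A (σ j))) N =
      P (σ N) * orderedProd (fun j => (P (σ (j + 1)))⁻¹ * P (σ j) * exp (τ j • J (σ j))) N *
        (P (σ 0))⁻¹ := by
    simpa [hA, Matrix.exp_smul_conj (hP _)] using
      orderedProd_units_conj (fun j => (hP (σ j)).unit) (fun j => exp (τ j • J (σ j))) N
  have hG := norm_orderedProd_le_pow hN fun j hj => hKbound _ _ (hσ j hj) _ (hτ j hj)
  have hKN := pow_le_exp_neg_mul_sum hK0 hβ.le (div_mul_cancel₀ _ hT.ne').le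
    fun j hj => (hIsub _ _ (hσ j hj) (hτ j hj)).2
  have hPP : ‖P (σ N)‖ * ‖(P (σ 0))⁻¹‖ ≤ 1 + (∑ i, ‖P i‖) * ∑ i, ‖(P i)⁻¹‖ := by
    have h₁ := Finset.single_le_sum (fun i _ => norm_nonneg (P i)) (Finset.mem_univ (σ N))
    have h₂ := Finset.single_le_sum (fun i _ => norm_nonneg (P i)⁻¹) (Finset.mem_univ (σ 0))
    nlinarith [norm_nonneg (P (σ N)), norm_nonneg (P (σ 0))⁻¹]
  change ‖orderedProd _ N‖ ≤ _
  rw [hprod]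
  calc _ ≤ ‖P (σ N)‖ * ‖orderedProd _ N‖ * ‖(P (σ 0))⁻¹‖ := norm_mul₃_le
    _ = ‖P (σ N)‖ * ‖(P (σ 0))⁻¹‖ * ‖orderedProd _ N‖ := by ring
    _ ≤ _ := mul_le_mul hPP (hG.trans hKN) (norm_nonneg _) (by positivity)

/-- Main stability theorem, exponential-in-time form.  Let `E` be an edge relation on
`{1,…,k}`, `P₁,…,P_k` invertible `n × n` real matrices, `J₁,…,J_k` real matrices,
`A_i = P_i J_i P_i⁻¹`.  Suppose `0 < K < 1`, `T > 0`, and for each edge `(r,s) ∈ E` there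
is a nonempty set `I_{(r,s)} ⊆ (0, T]` with `‖P_s⁻¹ P_r · exp(η J_r)‖ ≤ K` for all
`η ∈ I_{(r,s)}`.  Then there are `C > 0` and `β > 0` such that every admissible switching
path of length `n ≥ 1` with admissible durations satisfies
`‖exp(τ_{n−1} A_{σ_{n−1}}) ⋯ exp(τ₀ A_{σ₀})‖ ≤ C · e^{−β(τ₀+⋯+τ_{n−1})}`. -/
theorem switched_system_exponential_stability {n k : ℕ} (hk : 0 < k)
    (E : Fin k → Fin k → Prop)
    (P J A : Fin k → Matrix (Fin n) (Fin n) ℝ)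
    (hP : ∀ i, IsUnit (P i))
    (hA : ∀ i, A i = P i * J i * (P i)⁻¹)
    (K : ℝ) (hK0 : 0 < K) (hK1 : K < 1) (T : ℝ) (hT : 0 < T)
    (I : Fin k → Fin k → Set ℝ)
    (hImem : ∀ r s, E r s → (I r s).Nonempty)
    (hIsub : ∀ r s, E r s → I r s ⊆ Set.Ioc (0 : ℝ) T)
    (hKbound : ∀ r s, E r s → ∀ η ∈ I r s, ‖(P s)⁻¹ * P r * exp (η • J r)‖ ≤ K) :
    ∃ C > (0 : ℝ), ∃ β > (0 : ℝ),
      ∀ N : ℕ, 1 ≤ N → ∀ σ : ℕ → Fin k, (∀ j < N, E (σ j) (σ (j + 1))) →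
        ∀ τ : ℕ → ℝ, (∀ j < N, τ j ∈ I (σ j) (σ (j + 1))) →
          ‖((List.range N).reverse.map (fun j => exp (τ j • A (σ j)))).prod‖ ≤
            C * Real.exp (-β * ∑ j ∈ Finset.range N, τ j) :=
  switched_system_exponential_stability_general E P J A hP hA K hK0 hK1 T hT I hIsub hKbound
end

section
/- (Trace obstruction for planar systems.) Let p ≥ 1 and, for each j ∈ {0,…,p−1}, let A_j, J_j be 2×2 real matrices and P_j an invertible 2×2 real matrix with A_j = P_j J_j P_j⁻¹. Suppose there exist η_j > 0 such that ‖P_{j+1 mod p}⁻¹ P_j · exp(η_j J_j)‖ < 1 for every j ∈ {0,…,p−1}. Then there exists j with trace(A_j) < 0; i.e., the traces of A₀,…,A_{p−1} cannot all be nonnegative. -/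
/-!
Conjugating factors telescope around the loop, so by Liouville's formula
`∏ⱼ det (P_{j+1}⁻¹ P_j exp (η_j J_j)) = exp (∑ⱼ η_j tr J_j)`, which is at least `1` when all
traces are nonnegative. In dimension two, however, `|det M| ≤ ‖M‖²` (the eigenvalues of `Mᴴ M`
are bounded by `‖Mᴴ M‖ = ‖M‖²`), so every factor has absolute value less than `1`.
-/

open scoped Matrix.Norms.L2Operator
open NormedSpace

namespace Matrix

variable {𝕜 n : Type*} [RCLike 𝕜] [Fintype n] [DecidableEq n]

lemma IsHermitian.abs_eigenvalues_le_l2_opNorm {A : Matrix n n 𝕜} (hA : A.IsHermitian) (i : n) :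
    |hA.eigenvalues i| ≤ ‖A‖ := by
  have hv : ‖hA.eigenvectorBasis i‖ = 1 := hA.eigenvectorBasis.orthonormal.1 i
  have hbound := A.l2_opNorm_mulVec (hA.eigenvectorBasis i)
  rw [hA.mulVec_eigenvectorBasis, hv, mul_one] at hbound
  simpa [norm_smul, hv] using hbound

lemma norm_det_le_l2_opNorm_pow (M : Matrix n n 𝕜) : ‖M.det‖ ≤ ‖M‖ ^ Fintype.card n := by
  have hH := isHermitian_conjTranspose_mul_self M
  have hdet : ((‖M.det‖ ^ 2 : ℝ) : 𝕜) = ((∏ i, hH.eigenvalues i : ℝ) : 𝕜) := by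
    rw [RCLike.ofReal_prod, ← hH.det_eq_prod_eigenvalues, det_mul, det_conjTranspose,
      RCLike.star_def, RCLike.conj_mul]
    norm_cast
  have hsq : ‖M.det‖ ^ 2 ≤ (‖M‖ ^ Fintype.card n) ^ 2 :=
    calc ‖M.det‖ ^ 2 = ∏ i, hH.eigenvalues i := RCLike.ofReal_injective hdet
      _ ≤ ∏ _i : n, ‖Mᴴ * M‖ := Finset.prod_le_prod
          (fun i _ => eigenvalues_conjTranspose_mul_self_nonneg M i)
          (fun i _ => (le_abs_self _).trans (hH.abs_eigenvalues_le_l2_opNorm i))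
      _ = (‖M‖ ^ Fintype.card n) ^ 2 := by
        rw [Finset.prod_const, l2_opNorm_conjTranspose_mul_self, Finset.card_univ]; ring
  exact (pow_le_pow_iff_left₀ (norm_nonneg _) (by positivity) two_ne_zero).mp hsq

lemma prod_det_inv_mul_mul_cyclic {K : Type*} [Field K] {p : ℕ} [NeZero p]
    (P X : Fin p → Matrix n n K) (hP : ∀ i, IsUnit (P i)) :
    ∏ i, ((P (i + 1))⁻¹ * P i * X i).det = ∏ i, (X i).det := by
  have hshift : ∏ i, (P (i + 1)).det = ∏ i, (P i).det :=
    Equiv.prod_comp (Equiv.addRight (1 : Fin p)) fun i => (P i).det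
  have hne : ∏ i, (P i).det ≠ 0 :=
    Finset.prod_ne_zero_iff.mpr fun i _ => ((isUnit_iff_isUnit_det _).mp (hP i)).ne_zero
  simp only [det_mul, det_nonsing_inv, Ring.inverse_eq_inv', Finset.prod_mul_distrib,
    Finset.prod_inv_distrib, hshift, inv_mul_cancel₀ hne, one_mul]

lemma hasDerivAt_exp_smul_apply (M : Matrix n n ℝ) (i j : n) (t : ℝ) :
    HasDerivAt (fun s : ℝ => exp (s • M) i j) ((exp (t • M) * M) i j) t :=
  (entryLinearMap ℝ ℝ i j).toContinuousLinearMap.hasFDerivAt.comp_hasDerivAt t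
    (hasDerivAt_exp_smul_const M t)

lemma hasDerivAt_det_exp_smul_fin_two (M : Matrix (Fin 2) (Fin 2) ℝ) (t : ℝ) :
    HasDerivAt (fun s : ℝ => (exp (s • M)).det) (M.trace * (exp (t • M)).det) t := by
  have hd := fun i j => hasDerivAt_exp_smul_apply M i j t
  simp only [det_fin_two]
  refine (((hd 0 0).mul (hd 1 1)).sub ((hd 0 1).mul (hd 1 0))).congr_deriv ?_
  simp only [trace_fin_two, mul_apply, Fin.sum_univ_two]
  ring

/-- Liouville's formula in dimension two. -/
lemma det_exp_smul_fin_two (M : Matrix (Fin 2) (Fin 2) ℝ) (t : ℝ) :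
    (exp (t • M)).det = Real.exp (t * M.trace) := by
  have hderiv (s : ℝ) :
      HasDerivAt (fun s => (exp (s • M)).det * Real.exp (-(s * M.trace))) 0 s := by
    have hexp : HasDerivAt (fun s => Real.exp (-(s * M.trace)))
        (Real.exp (-(s * M.trace)) * -M.trace) s :=
      (hasDerivAt_mul_const M.trace).neg.exp
    exact ((hasDerivAt_det_exp_smul_fin_two M s).mul hexp).congr_deriv (by ring)
  have hconst := is_const_of_deriv_eq_zero (fun s => (hderiv s).differentiableAt)
    (fun s => (hderiv s).deriv) t 0
  simp only [zero_smul, exp_zero, det_one, zero_mul, neg_zero, Real.exp_zero, mul_one] at hconst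
  rwa [Real.exp_neg, mul_inv_eq_one₀ (Real.exp_ne_zero _)] at hconst

end Matrix

open Matrix

/-- Trace obstruction for planar systems.  Let `p ≥ 1` and, for each `j ∈ {0,…,p−1}`, let
`A_j, J_j` be `2 × 2` real matrices and `P_j` invertible with `A_j = P_j J_j P_j⁻¹`
(indices along a loop, taken mod `p`).  If there exist `η_j > 0` with
`‖P_{(j+1) mod p}⁻¹ P_j · exp(η_j J_j)‖ < 1` for every `j`, then some `A_j` has negative
trace; i.e. the traces cannot all be nonnegative. -/
theorem trace_obstruction_planar {p : ℕ} (hp : 1 ≤ p)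
    (A J P : ℕ → Matrix (Fin 2) (Fin 2) ℝ)
    (hP : ∀ j < p, IsUnit (P j))
    (hA : ∀ j < p, A j = P j * J j * (P j)⁻¹)
    (hη : ∀ j < p, ∃ η > (0 : ℝ), ‖(P ((j + 1) % p))⁻¹ * P j * exp (η • J j)‖ < 1) :
    ∃ j < p, (A j).trace < 0 := by
  by_contra! htr
  have : NeZero p := ⟨by omega⟩
  choose η hη_pos hη_lt using fun i : Fin p => hη i i.2
  set M : Fin p → Matrix (Fin 2) (Fin 2) ℝ := fun i => (P ↑(i + 1))⁻¹ * P i * exp (η i • J i)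
  have hM_lt (i : Fin p) : ‖M i‖ < 1 := by
    simpa only [M, Fin.val_add, Fin.val_one', Nat.add_mod_mod] using hη_lt i
  have hdet : ∏ i, (M i).det = Real.exp (∑ i, η i * (J i).trace) := by
    rw [prod_det_inv_mul_mul_cyclic (fun i => P i) _ fun i => hP i i.2, Real.exp_sum]
    simp only [det_exp_smul_fin_two]
  have hdet_ge : 1 ≤ ∏ i, (M i).det := hdet ▸ Real.one_le_exp <| Finset.sum_nonneg fun i _ =>
    mul_nonneg (hη_pos i).le (trace_conj (hP i i.2) (J i) ▸ hA i i.2 ▸ htr i i.2)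
  have hdet_ne (i : Fin p) : (M i).det ≠ 0 :=
    Finset.prod_ne_zero_iff.mp (hdet ▸ (Real.exp_pos _).ne') i (Finset.mem_univ i)
  have hdet_lt : |∏ i, (M i).det| < 1 :=
    calc |∏ i, (M i).det| = ∏ i, ‖(M i).det‖ := Finset.abs_prod _ _
      _ < ∏ _i : Fin p, (1 : ℝ) := Finset.prod_lt_prod_of_nonempty
          (fun i _ => norm_pos_iff.mpr (hdet_ne i))
          (fun i _ => (norm_det_le_l2_opNorm_pow (M i)).trans_lt
            (pow_lt_one₀ (norm_nonneg _) (hM_lt i) two_ne_zero))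
          Finset.univ_nonempty
      _ = 1 := Finset.prod_const_one
  exact (hdet_ge.trans (le_abs_self _)).not_gt hdet_lt
end

section
/- For a 2×2 real matrix M, the spectral norm satisfies ‖M‖ < 1 if and only if (det M)² < 1 and ‖M‖_F² < 1 + (det M)², where ‖M‖_F² = Σ_{i,j} M_{ij}² is the squared Frobenius norm. -/
/-!
Write `‖M (u, v)‖² = a u² + 2 b u v + c v²`, the quadratic form of the Gram matrix
`G = Mᵀ M = !![a, b; b, c]`. Then `‖M‖ < 1` exactly when this form is bounded by `s (u² + v²)`
for some `s < 1`, i.e. when `1 - G` is positive definite: `a < 1` and `b² < (1 - a)(1 - c)`.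
Since `a, c ≥ 0`, this is equivalent to `det G < 1` and `tr G < 1 + det G`, and
`det G = (det M)²`, `tr G = ‖M‖_F²`.
-/

open scoped Matrix.Norms.L2Operator
open Matrix

theorem ContinuousLinearMap.opNorm_lt_one_iff_exists_norm_sq_le {𝕜 E F : Type*}
    [NontriviallyNormedField 𝕜] [SeminormedAddCommGroup E] [SeminormedAddCommGroup F]
    [NormedSpace 𝕜 E] [NormedSpace 𝕜 F] (f : E →L[𝕜] F) :
    ‖f‖ < 1 ↔ ∃ s < 1, ∀ x, ‖f x‖ ^ 2 ≤ s * ‖x‖ ^ 2 := by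
  constructor
  · intro hf
    refine ⟨‖f‖ ^ 2, pow_lt_one₀ (norm_nonneg f) hf two_ne_zero, fun x => ?_⟩
    rw [← mul_pow]
    exact pow_le_pow_left₀ (norm_nonneg _) (f.le_opNorm x) 2
  · rintro ⟨s, hs, hfs⟩
    have hs0 : 0 ≤ max s 0 := le_max_right s 0
    calc ‖f‖ ≤ √(max s 0) := f.opNorm_le_bound (Real.sqrt_nonneg _) fun x => by
            rw [← sq_le_sq₀ (norm_nonneg _) (by positivity), mul_pow, Real.sq_sqrt hs0]
            exact (hfs x).trans (by gcongr; exact le_max_left s 0)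
      _ < 1 := (Real.sqrt_lt' one_pos).mpr (by simpa using max_lt hs one_pos)

theorem EuclideanSpace.forall_fin_two {𝕜 : Type*} {P : EuclideanSpace 𝕜 (Fin 2) → Prop} :
    (∀ x, P x) ↔ ∀ u v, P !₂[u, v] := by
  refine ⟨fun h u v => h _, fun h x => ?_⟩
  have hx : x = !₂[x 0, x 1] := by ext i; fin_cases i <;> rfl
  exact hx ▸ h (x 0) (x 1)

theorem EuclideanSpace.norm_sq_fin_two (u v : ℝ) : ‖!₂[u, v]‖ ^ 2 = u ^ 2 + v ^ 2 := by
  simp [EuclideanSpace.real_norm_sq_eq, Fin.sum_univ_two]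

theorem Matrix.norm_toEuclideanCLM_fin_two_sq (M : Matrix (Fin 2) (Fin 2) ℝ) (u v : ℝ) :
    ‖toEuclideanCLM (𝕜 := ℝ) M !₂[u, v]‖ ^ 2 =
      (M 0 0 ^ 2 + M 1 0 ^ 2) * u ^ 2 + 2 * (M 0 0 * M 0 1 + M 1 0 * M 1 1) * u * v
        + (M 0 1 ^ 2 + M 1 1 ^ 2) * v ^ 2 := by
  simp only [toEuclideanCLM_toLp, mulVec_fin_two, cons_val_zero, cons_val_one,
    EuclideanSpace.real_norm_sq_eq, Fin.sum_univ_two]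
  ring

theorem forall_binary_quadratic_nonneg_iff {p q r : ℝ} :
    (∀ u v : ℝ, 0 ≤ p * u ^ 2 + 2 * q * u * v + r * v ^ 2) ↔ 0 ≤ p ∧ 0 ≤ r ∧ q ^ 2 ≤ p * r := by
  constructor
  · intro h
    have hdisc : discrim p (2 * q) r ≤ 0 := discrim_le_zero fun u => by simpa [sq] using h u 1
    refine ⟨by simpa using h 1 0, by simpa using h 0 1, ?_⟩
    rw [discrim] at hdisc
    linarith
  · rintro ⟨hp, hr, hq⟩ u v
    rcases hp.eq_or_lt with rfl | hp
    · have : q = 0 := by nlinarith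
      simpa [this] using mul_nonneg hr (sq_nonneg v)
    · have hsq : p * (p * u ^ 2 + 2 * q * u * v + r * v ^ 2)
          = (p * u + q * v) ^ 2 + (p * r - q ^ 2) * v ^ 2 := by ring
      have hmul : 0 ≤ p * (p * u ^ 2 + 2 * q * u * v + r * v ^ 2) := by
        rw [hsq]; nlinarith [sq_nonneg (p * u + q * v), sq_nonneg v]
      exact nonneg_of_mul_nonneg_right (by linarith) hp

theorem forall_binary_quadratic_le_iff {a b c s : ℝ} :
    (∀ u v : ℝ, a * u ^ 2 + 2 * b * u * v + c * v ^ 2 ≤ s * (u ^ 2 + v ^ 2)) ↔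
      a ≤ s ∧ c ≤ s ∧ b ^ 2 ≤ (s - a) * (s - c) := by
  have key := forall_binary_quadratic_nonneg_iff (p := s - a) (q := -b) (r := s - c)
  rw [sub_nonneg, sub_nonneg, neg_sq] at key
  rw [← key]
  exact forall₂_congr fun u v => ⟨fun h => by linarith, fun h => by linarith⟩

theorem exists_lt_one_forall_binary_quadratic_le_iff {a b c : ℝ} :
    (∃ s < 1, ∀ u v : ℝ, a * u ^ 2 + 2 * b * u * v + c * v ^ 2 ≤ s * (u ^ 2 + v ^ 2)) ↔
      a < 1 ∧ b ^ 2 < (1 - a) * (1 - c) := by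
  simp only [forall_binary_quadratic_le_iff]
  constructor
  · rintro ⟨s, hs, ha, hc, hb⟩
    exact ⟨ha.trans_lt hs, hb.trans_lt (mul_lt_mul'' (by linarith) (by linarith)
      (sub_nonneg.mpr ha) (sub_nonneg.mpr hc))⟩
  · rintro ⟨ha, hb⟩
    have hc : c < 1 := by nlinarith [sq_nonneg b]
    -- `ε` is chosen so that `(1 - a - ε) * (1 - c - ε) = b ^ 2 + ε ^ 2`.
    set ε := ((1 - a) * (1 - c) - b ^ 2) / ((1 - a) + (1 - c))
    have hε_mul : ε * ((1 - a) + (1 - c)) = (1 - a) * (1 - c) - b ^ 2 :=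
      div_mul_cancel₀ _ (by linarith)
    have hε_pos : 0 < ε := div_pos (by linarith) (by linarith)
    refine ⟨1 - ε, by linarith, ?_, ?_, ?_⟩
    · nlinarith [sq_nonneg b]
    · nlinarith [sq_nonneg b]
    · nlinarith [sq_nonneg ε]

/-- For the Gram matrix `G = !![a, b; b, c]`, positive definiteness of `1 - G` is equivalent to the
Schur stability conditions `det G < 1`, `tr G < 1 + det G`. -/
theorem lt_one_and_sq_lt_mul_one_sub_iff {a b c : ℝ} (ha : 0 ≤ a) (hc : 0 ≤ c) :
    a < 1 ∧ b ^ 2 < (1 - a) * (1 - c) ↔ a * c - b ^ 2 < 1 ∧ a + c < 1 + (a * c - b ^ 2) := by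
  constructor
  · rintro ⟨ha1, hb⟩
    have hc1 : c < 1 := by nlinarith [sq_nonneg b]
    constructor <;> nlinarith [sq_nonneg b, mul_lt_mul'' ha1 hc1 ha hc]
  · rintro ⟨hdet, htr⟩
    refine ⟨?_, by linarith⟩
    by_contra! ha1
    nlinarith [sq_nonneg b]

/-- For a `2 × 2` real matrix `M`, the spectral norm satisfies `‖M‖ < 1` if and only if
`(det M)² < 1` and `‖M‖_F² < 1 + (det M)²`, where `‖M‖_F² = Σ_{i,j} M_{ij}²` is the
squared Frobenius norm. -/
theorem spectral_norm_lt_one_iff (M : Matrix (Fin 2) (Fin 2) ℝ) :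
    ‖M‖ < 1 ↔ M.det ^ 2 < 1 ∧ (∑ i, ∑ j, M i j ^ 2) < 1 + M.det ^ 2 := by
  have hdet : (M 0 0 ^ 2 + M 1 0 ^ 2) * (M 0 1 ^ 2 + M 1 1 ^ 2)
      - (M 0 0 * M 0 1 + M 1 0 * M 1 1) ^ 2 = M.det ^ 2 := by
    rw [det_fin_two]; ring
  have hfrob : ∑ i, ∑ j, M i j ^ 2 = (M 0 0 ^ 2 + M 1 0 ^ 2) + (M 0 1 ^ 2 + M 1 1 ^ 2) := by
    simp only [Fin.sum_univ_two]; ring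
  rw [← l2_opNorm_toEuclideanCLM, ContinuousLinearMap.opNorm_lt_one_iff_exists_norm_sq_le]
  simp only [EuclideanSpace.forall_fin_two, norm_toEuclideanCLM_fin_two_sq,
    EuclideanSpace.norm_sq_fin_two]
  rw [exists_lt_one_forall_binary_quadratic_le_iff,
    lt_one_and_sq_lt_mul_one_sub_iff (by positivity) (by positivity), hdet, hfrob]
end

section
/- Let M be an n×n real matrix and λ* a real number such that every eigenvalue μ ∈ ℂ of M (equivalently, every root of the characteristic polynomial of M over ℂ) satisfies Re(μ) < λ*. Then there exists a constant β ≥ 1 such that ‖exp(tM)‖ ≤ β e^{λ* t} for all t ≥ 0. -/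
/-!
Subtracting `λ*` reduces the claim to a complex matrix `B` whose eigenvalues have negative real
part. An eigenvalue `μ` of `exp B` has an eigenvector that is also an eigenvector of the commuting
matrix `B`, for some eigenvalue `ν`, whence `μ = exp ν`; so `exp B` has spectral radius `< 1` and,
by Gelfand's formula, bounded powers. Writing `t = k + s` with `k ∈ ℕ` and `s ∈ [0, 1]` gives
`exp (t B) = (exp B) ^ k * exp (s B)`, which is bounded uniformly in `t ≥ 0`. Finally, the operator
norm of a real matrix is at most that of its complexification.
-/

open scoped Matrix.Norms.L2Operator
open NormedSpace

theorem Module.End.HasEigenvalue.exists_hasEigenvector_of_commute {K V : Type*} [Field K]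
    [IsAlgClosed K] [AddCommGroup V] [Module K V] [FiniteDimensional K V] {f g : End K V}
    (hfg : Commute f g) {μ : K} (hμ : f.HasEigenvalue μ) :
    ∃ ν v, f.HasEigenvector μ v ∧ g.HasEigenvector ν v := by
  have hmaps : Set.MapsTo g (f.eigenspace μ) (f.eigenspace μ) :=
    mapsTo_genEigenspace_of_comm hfg μ 1
  have : Nontrivial (f.eigenspace μ) := Submodule.nontrivial_iff_ne_bot.mpr hμ
  obtain ⟨ν, hν⟩ := exists_eigenvalue (g.restrict hmaps)
  obtain ⟨⟨v, hvμ⟩, hvν⟩ := hν.exists_hasEigenvector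
  have hv : v ≠ 0 := by simpa using hvν.2
  exact ⟨ν, v, ⟨hvμ, hv⟩, mem_eigenspace_iff.mpr (congrArg Subtype.val hvν.apply_eq_smul), hv⟩

section BanachAlgebra

variable {A : Type*} [NormedRing A] [CompleteSpace A]

theorem exp_algebraMap_add {𝕜 : Type*} [RCLike 𝕜] [NormedAlgebra 𝕜 A] (z : 𝕜) (b : A) :
    exp (algebraMap 𝕜 A z + b) = exp z • exp b := by
  let +nondep : NormedAlgebra ℚ A := .restrictScalars ℚ 𝕜 A
  rw [exp_add_of_commute (Algebra.commutes z b), ← algebraMap_exp_comm, Algebra.smul_def]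

variable [NormedAlgebra ℂ A]

theorem norm_exp_smul_eq_real_exp_mul_norm_exp_smul_sub (a : A) (r t : ℝ) :
    ‖exp (t • a)‖ = Real.exp (r * t) * ‖exp (t • (a - algebraMap ℂ A r))‖ := by
  have hshift : t • algebraMap ℂ A r = algebraMap ℂ A (r * t : ℝ) := by
    rw [Algebra.algebraMap_eq_smul_one, Algebra.algebraMap_eq_smul_one, ← smul_assoc,
      Complex.real_smul, Complex.ofReal_mul, mul_comm]
  calc ‖exp (t • a)‖ = ‖exp (algebraMap ℂ A (r * t : ℝ) + t • (a - algebraMap ℂ A r))‖ := by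
        rw [smul_sub, hshift, add_sub_cancel]
    _ = _ := by rw [exp_algebraMap_add, norm_smul, ← Complex.exp_eq_exp_ℂ, Complex.norm_exp_ofReal]

open Filter in
theorem exists_norm_pow_le_of_spectralRadius_lt_one {a : A} (ha : spectralRadius ℂ a < 1) :
    ∃ C, ∀ k : ℕ, ‖a ^ k‖ ≤ C := by
  have hle : ∀ᶠ k : ℕ in atTop, ‖a ^ k‖ ≤ 1 := by
    filter_upwards
      [(spectrum.pow_norm_pow_one_div_tendsto_nhds_spectralRadius a).eventually_lt_const ha]
      with k hk
    by_contra! h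
    exact (ENNReal.ofReal_lt_one.mp hk).not_ge (Real.one_le_rpow h.le (by positivity))
  obtain ⟨C, hC⟩ := (isBoundedUnder_of_eventually_le hle).bddAbove_range
  exact ⟨C, fun k => hC ⟨k, rfl⟩⟩

theorem exists_norm_exp_smul_le_of_spectralRadius_exp_lt_one {a : A}
    (ha : spectralRadius ℂ (exp a) < 1) : ∃ C, ∀ t : ℝ, 0 ≤ t → ‖exp (t • a)‖ ≤ C := by
  let +nondep : NormedAlgebra ℚ A := .restrictScalars ℚ ℂ A
  obtain ⟨C₁, hC₁⟩ := exists_norm_pow_le_of_spectralRadius_lt_one ha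
  obtain ⟨C₂, hC₂⟩ := isCompact_Icc.exists_bound_of_continuousOn
    (f := fun s : ℝ => exp (s • a)) (s := Set.Icc 0 1) (by fun_prop)
  refine ⟨C₁ * C₂, fun t ht => ?_⟩
  set k := ⌊t⌋₊
  have hs : t - k ∈ Set.Icc (0 : ℝ) 1 :=
    ⟨sub_nonneg.2 (Nat.floor_le ht), by linarith [Nat.lt_floor_add_one t]⟩
  have hsplit : exp (t • a) = exp a ^ k * exp ((t - k) • a) := by
    rw [← exp_nsmul, ← exp_add_of_commute ((Commute.refl a).smul_left _ |>.smul_right _),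
      ← Nat.cast_smul_eq_nsmul ℝ, ← add_smul, add_sub_cancel]
  rw [hsplit]
  exact (norm_mul_le _ _).trans
    (mul_le_mul (hC₁ k) (hC₂ _ hs) (norm_nonneg _) ((norm_nonneg _).trans (hC₁ 0)))

end BanachAlgebra

namespace Matrix

variable {ι : Type*} [Fintype ι] [DecidableEq ι]

theorem exp_mulVec_of_mulVec_eq_smul {𝕜 : Type*} [RCLike 𝕜] {B : Matrix ι ι 𝕜} {v : ι → 𝕜}
    {ν : 𝕜} (hv : B *ᵥ v = ν • v) : exp B *ᵥ v = exp ν • v := by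
  have hpow (k : ℕ) : B ^ k *ᵥ v = ν ^ k • v := by
    induction k with
    | zero => simp
    | succ k ih => rw [pow_succ, ← mulVec_mulVec, hv, mulVec_smul, ih, smul_smul, ← pow_succ']
  have hB := (exp_series_hasSum_exp' (𝕂 := 𝕜) B).map (mulVec.addMonoidHomLeft v)
    (continuous_id.matrix_mulVec continuous_const)
  refine hB.unique ?_
  simpa [mulVec.addMonoidHomLeft, Function.comp_def, smul_mulVec, hpow, smul_smul] using
    (exp_series_hasSum_exp' (𝕂 := 𝕜) ν).smul_const v

theorem spectrum_exp_subset_exp_image (B : Matrix ι ι ℂ) :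
    spectrum ℂ (exp B) ⊆ Complex.exp '' spectrum ℂ B := by
  intro μ hμ
  rw [← AlgEquiv.spectrum_eq toLinAlgEquiv', ← Module.End.hasEigenvalue_iff_mem_spectrum] at hμ
  obtain ⟨ν, v, hμv, hνv⟩ :=
    hμ.exists_hasEigenvector_of_commute ((Commute.refl B).exp_left.map toLinAlgEquiv')
  have hBv : B *ᵥ v = ν • v := by simpa using hνv.apply_eq_smul
  have hexpv : exp B *ᵥ v = μ • v := by simpa using hμv.apply_eq_smul
  refine ⟨ν, ?_, smul_left_injective ℂ hμv.2 ?_⟩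
  · rw [← AlgEquiv.spectrum_eq toLinAlgEquiv']
    exact (Module.End.hasEigenvalue_of_hasEigenvector hνv).mem_spectrum
  · simp only [← hexpv, exp_mulVec_of_mulVec_eq_smul hBv, Complex.exp_eq_exp_ℂ]

theorem spectralRadius_exp_lt_one {B : Matrix ι ι ℂ} (hB : ∀ ν ∈ spectrum ℂ B, ν.re < 0) :
    spectralRadius ℂ (exp B) < 1 := by
  obtain ⟨s, hs⟩ := (finite_spectrum (exp B)).exists_finset_coe
  rw [spectralRadius, ← hs]
  simp_rw [Finset.mem_coe, ← Finset.sup_eq_iSup]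
  refine (Finset.sup_lt_iff zero_lt_one).2 fun z hz => ?_
  obtain ⟨ν, hν, rfl⟩ := spectrum_exp_subset_exp_image B (hs ▸ Finset.mem_coe.2 hz)
  simpa [← NNReal.coe_lt_coe, Complex.norm_exp] using hB ν hν

theorem map_ofReal_exp (X : Matrix ι ι ℝ) :
    (exp X).map (Complex.ofReal ·) = exp (X.map (Complex.ofReal ·)) := by
  let +nondep : NormedAlgebra ℚ (Matrix ι ι ℝ) := .restrictScalars ℚ ℝ _
  exact map_exp Complex.ofRealHom.mapMatrix (continuous_id.matrix_map Complex.continuous_ofReal) X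

theorem l2_opNorm_le_l2_opNorm_map_ofReal {m n : Type*} [Fintype m] [Fintype n] [DecidableEq n]
    (X : Matrix m n ℝ) : ‖X‖ ≤ ‖X.map (Complex.ofReal ·)‖ := by
  rw [l2_opNorm_def]
  refine ContinuousLinearMap.opNorm_le_bound _ (norm_nonneg _) fun x => ?_
  have hmulVec :
      X.map (Complex.ofReal ·) *ᵥ (fun i => (x i : ℂ)) = fun i => ((X *ᵥ x.ofLp) i : ℂ) :=
    funext fun i => (RingHom.map_mulVec Complex.ofRealHom X x.ofLp i).symm
  convert l2_opNorm_mulVec (X.map (Complex.ofReal ·)) (WithLp.toLp 2 (fun i => (x i : ℂ)))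
    using 2
  · simp [EuclideanSpace.norm_eq, hmulVec, toEuclideanLin]
  · simp [EuclideanSpace.norm_eq]

end Matrix

/-- Let `M` be an `n × n` real matrix and `λ*` a real number such that every eigenvalue
`μ ∈ ℂ` of `M` satisfies `Re(μ) < λ*`.  Then there exists `β ≥ 1` such that
`‖exp(tM)‖ ≤ β e^{λ* t}` for all `t ≥ 0`. -/
theorem norm_exp_le_of_spectral_abscissa_lt {n : ℕ}
    (M : Matrix (Fin n) (Fin n) ℝ) (lamStar : ℝ)
    (hspec : ∀ μ ∈ spectrum ℂ (M.map (Complex.ofReal ·)), μ.re < lamStar) :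
    ∃ β : ℝ, 1 ≤ β ∧ ∀ t : ℝ, 0 ≤ t → ‖exp (t • M)‖ ≤ β * Real.exp (lamStar * t) := by
  set A := M.map (Complex.ofReal ·)
  set B := A - algebraMap ℂ _ (lamStar : ℂ)
  have hB : ∀ ν ∈ spectrum ℂ B, ν.re < 0 := by
    intro ν hν
    rw [← spectrum.sub_singleton_eq] at hν
    obtain ⟨μ, hμ, _, rfl, rfl⟩ := hν
    simpa using hspec μ hμ
  obtain ⟨C, hC⟩ := exists_norm_exp_smul_le_of_spectralRadius_exp_lt_one (a := B)
    (Matrix.spectralRadius_exp_lt_one hB)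
  refine ⟨max C 1, le_max_right _ _, fun t ht => ?_⟩
  calc ‖exp (t • M)‖ ≤ ‖(exp (t • M)).map (Complex.ofReal ·)‖ :=
        Matrix.l2_opNorm_le_l2_opNorm_map_ofReal _
    _ = Real.exp (lamStar * t) * ‖exp (t • B)‖ := by
        rw [Matrix.map_ofReal_exp, Matrix.map_smul _ t (fun _ => Complex.ofReal_mul _ _),
          norm_exp_smul_eq_real_exp_mul_norm_exp_smul_sub _ lamStar]
    _ ≤ Real.exp (lamStar * t) * max C 1 := by gcongr; exact (hC t ht).trans (le_max_left _ _)
    _ = max C 1 * Real.exp (lamStar * t) := mul_comm _ _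
end
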